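/- arXiv:2311.13872 — 2 statements merged into one kernel-verified Lean document; each statement's English description precedes it below -/
import Mathlib

section
/- Let μ, ν ∈ M₊(X) with μ(X) = ν(X). Then F(μ,ν) ≥ f( ∫_X x ⊗ x d(ν − μ)(x) ), i.e. F(μ,ν) is bounded below by f evaluated at the difference of the second-moment matrices of ν and μ. -/
open MeasureTheory Set Filter Topology
open scoped ENNReal NNReal Classical

noncomputable section

/-- Euclidean space `ℝ^d`. -/
abbrev Ed (d : ℕ) := EuclideanSpace ℝ (Fin d)

/-- The space `M_d` of real `d × d` matrices. -/
abbrev Matd (d : ℕ) := Matrix (Fin d) (Fin d) ℝ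

/-- The Frobenius inner product `A : B = tr(Aᵀ B)`. -/
def frob {d : ℕ} (A B : Matd d) : ℝ := ∑ i, ∑ j, A i j * B i j

/-- The Frobenius norm of a matrix. -/
def matnorm {d : ℕ} (A : Matd d) : ℝ := Real.sqrt (frob A A)

/-- The Hessian matrix `∇²φ(x)`. -/
def hess {d : ℕ} (φ : Ed d → ℝ) (x : Ed d) : Matd d :=
  fun i j => iteratedFDeriv ℝ 2 φ x ![EuclideanSpace.single i 1, EuclideanSpace.single j 1]

/-- `φ ∈ C²_c(ℝ^d)`. -/
def IsC2c {d : ℕ} (φ : Ed d → ℝ) : Prop := ContDiff ℝ 2 φ ∧ HasCompactSupport φ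

/-- Assumption (A1): `dom f ⊆ S⁺_d`, `f` is coercive and sublinear
(subadditive and positively 1-homogeneous). -/
def CostA1 {d : ℕ} (f : Matd d → ℝ≥0∞) : Prop :=
  (∀ M, f M ≠ ⊤ → M.PosSemidef) ∧
  (∃ c : ℝ, 0 < c ∧ ∀ M, ENNReal.ofReal (c * matnorm M) ≤ f M) ∧
  (∀ A B, f (A + B) ≤ f A + f B) ∧
  (∀ t : ℝ, 0 ≤ t → ∀ A, f (t • A) = ENNReal.ofReal t * f A)

/-- Assumption (A2): `f` is lower semicontinuous. -/
def CostA2 {d : ℕ} (f : Matd d → ℝ≥0∞) : Prop := LowerSemicontinuous f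

/-- `dom(f⋆) = {A | A : M ≤ f(M) for all M ∈ dom f}`. -/
def domFstar {d : ℕ} (f : Matd d → ℝ≥0∞) : Set (Matd d) :=
  { A | ∀ M, f M ≠ ⊤ → ENNReal.ofReal (frob A M) ≤ f M }

/-- A competitor `λ = ρ·m` (an `S⁺_d`-valued measure supported in `X`) for the static problem:
`tr(½∇²λ) = ν − μ` in the distributional sense. -/
def IsStaticCompetitor {d : ℕ} (X : Set (Ed d)) (μ ν : Measure (Ed d))
    (m : Measure (Ed d)) (ρ : Ed d → Matd d) : Prop :=
  IsFiniteMeasure m ∧ m Xᶜ = 0 ∧ (∀ x, (ρ x).PosSemidef) ∧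
    ∀ φ : Ed d → ℝ, IsC2c φ →
      ∫ x, (1/2 : ℝ) * frob (hess φ x) (ρ x) ∂m = ∫ x, φ x ∂ν - ∫ x, φ x ∂μ

/-- The static value `F(μ,ν)` (using the positive 1-homogeneity of `f`, the cost of
`λ = ρ·m` is `∫ f(dλ/d|λ|) d|λ| = ∫ f(ρ) dm`). -/
def Fstat {d : ℕ} (f : Matd d → ℝ≥0∞) (X : Set (Ed d)) (μ ν : Measure (Ed d)) : ℝ≥0∞ :=
  sInf { c | ∃ m ρ, IsStaticCompetitor X μ ν m ρ ∧ c = ∫⁻ x, f (ρ x) ∂m }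

/-- `(ϱ, λ)`, with `ϱ = ϱ_t ⊗ L¹⌞(0,1)` and `λ = (ρ_t · m_t) ⊗ L¹⌞(0,1)` an `S⁺_d`-valued
measure, solves the Fokker–Planck equation `∂_t ϱ = tr(½∇²λ)` on `(0,1) × ℝ^d`. -/
def SolvesFPE {d : ℕ} (ϱ : ℝ → Measure (Ed d)) (m : ℝ → Measure (Ed d))
    (ρ : ℝ → Ed d → Matd d) : Prop :=
  (∀ t ∈ Ioo (0:ℝ) 1, IsFiniteMeasure (ϱ t) ∧ IsFiniteMeasure (m t)) ∧
  (∀ t ∈ Ioo (0:ℝ) 1, ∀ x, (ρ t x).PosSemidef) ∧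
  (∀ A : Set (Ed d), IsCompact A →
    (∫⁻ t in Ioo (0:ℝ) 1, ∫⁻ x in A, ENNReal.ofReal (matnorm (ρ t x)) ∂(m t)) < ⊤) ∧
  (∀ φ : ℝ × Ed d → ℝ, ContDiff ℝ 2 φ → HasCompactSupport φ →
    tsupport φ ⊆ Ioo (0:ℝ) 1 ×ˢ (univ : Set (Ed d)) →
    (∫ t in Ioo (0:ℝ) 1, ∫ x, fderiv ℝ φ (t, x) (1, 0) ∂(ϱ t)) =
      - ∫ t in Ioo (0:ℝ) 1, ∫ x, (1/2 : ℝ) * frob (hess (fun y => φ (t, y)) x) (ρ t x) ∂(m t))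

/-- The support condition (⋆): `supp ϱ_t, supp λ_t ⊆ X` for a.e. `t ∈ (0,1)`. -/
def SuppCond {d : ℕ} (X : Set (Ed d)) (ϱ m : ℝ → Measure (Ed d)) : Prop :=
  ∀ᵐ t ∂(volume.restrict (Ioo (0:ℝ) 1)), (ϱ t) Xᶜ = 0 ∧ (m t) Xᶜ = 0

/-- `μ` is the weak* (narrow) limit of `ϱ_t` as `t → t₀` within `(0,1)`. -/
def NarrowLim {d : ℕ} (ϱ : ℝ → Measure (Ed d)) (t₀ : ℝ) (μ : Measure (Ed d)) : Prop :=
  ∀ g : BoundedContinuousFunction (Ed d) ℝ,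
    Tendsto (fun t => ∫ x, g x ∂(ϱ t)) (𝓝[Ioo (0:ℝ) 1] t₀) (𝓝 (∫ x, g x ∂μ))

/-- The dynamic (Benamou–Brenier type) value `F(μ,ν)`. -/
def Fdyn {d : ℕ} (f : Matd d → ℝ≥0∞) (X : Set (Ed d)) (μ ν : Measure (Ed d)) : ℝ≥0∞ :=
  sInf { c | ∃ ϱ m ρ, SolvesFPE ϱ m ρ ∧ SuppCond X ϱ m ∧
      NarrowLim ϱ 0 μ ∧ NarrowLim ϱ 1 ν ∧
      c = ∫⁻ t in Ioo (0:ℝ) 1, ∫⁻ x, f (ρ t x) ∂(m t) }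

/-- the cost `G(x,p) := F(δ_x, p)`. -/
def Gcost {d : ℕ} (f : Matd d → ℝ≥0∞) (X : Set (Ed d)) (x : Ed d)
    (p : Measure (Ed d)) : ℝ≥0∞ :=
  Fstat f X (Measure.dirac x) p

/-- A disintegration kernel `x ↦ γ^x` of a transport plan `γ ∈ Π(μ,ν)`. -/
def IsTransportKernel {d : ℕ} (X : Set (Ed d)) (μ ν : Measure (Ed d))
    (κ : Ed d → Measure (Ed d)) : Prop :=
  (∀ x, IsProbabilityMeasure (κ x) ∧ (κ x) Xᶜ = 0) ∧
  (∀ A : Set (Ed d), MeasurableSet A → Measurable fun x => κ x A) ∧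
  (∀ A : Set (Ed d), MeasurableSet A → ∫⁻ x, κ x A ∂μ = ν A)

/-- The static optimal transport value `H(μ,ν) = inf_{γ ∈ Π(μ,ν)} ∫ G(x,γ^x) dμ`. -/
def Hcost {d : ℕ} (f : Matd d → ℝ≥0∞) (X : Set (Ed d)) (μ ν : Measure (Ed d)) : ℝ≥0∞ :=
  sInf { c | ∃ κ, IsTransportKernel X μ ν κ ∧ c = ∫⁻ x, Gcost f X x (κ x) ∂μ }

/-- Integral of `φ` against a signed measure. -/
def sInt {d : ℕ} (s : SignedMeasure (Ed d)) (φ : Ed d → ℝ) : ℝ :=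
  ∫ x, φ x ∂s.toJordanDecomposition.posPart - ∫ x, φ x ∂s.toJordanDecomposition.negPart

/-- A signed measure is supported in `X`. -/
def SuppInX {d : ℕ} (X : Set (Ed d)) (s : SignedMeasure (Ed d)) : Prop :=
  ∀ A : Set (Ed d), MeasurableSet A → A ⊆ Xᶜ → s A = 0

/-- The extension of `F` to signed measures: `+∞` unless `μ, ν ≥ 0` with equal masses. -/
def FSgn {d : ℕ} (f : Matd d → ℝ≥0∞) (X : Set (Ed d)) (μ ν : SignedMeasure (Ed d)) : ℝ≥0∞ :=
  if 0 ≤ μ ∧ 0 ≤ ν ∧ μ univ = ν univ then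
    Fstat f X μ.toJordanDecomposition.posPart ν.toJordanDecomposition.posPart
  else ⊤

/-- The extension of `H` to signed measures: `+∞` unless `μ, ν ≥ 0` with equal masses. -/
def HSgn {d : ℕ} (f : Matd d → ℝ≥0∞) (X : Set (Ed d)) (μ ν : SignedMeasure (Ed d)) : ℝ≥0∞ :=
  if 0 ≤ μ ∧ 0 ≤ ν ∧ μ univ = ν univ then
    Hcost f X μ.toJordanDecomposition.posPart ν.toJordanDecomposition.posPart
  else ⊤

/-- The weak* topology on signed measures, in duality with continuous functions. -/
def weakStarTop (d : ℕ) : TopologicalSpace (SignedMeasure (Ed d)) :=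
  ⨅ g : C(Ed d, ℝ), TopologicalSpace.induced (fun s => sInt s g) inferInstance

/-- The `G`-transform `φ^G(x) = inf { ∫ φ dp + G(x,p) : p ∈ P(X) }`. -/
def GTrans {d : ℕ} (f : Matd d → ℝ≥0∞) (X : Set (Ed d)) (φ : Ed d → ℝ) (x : Ed d) : EReal :=
  sInf { c : EReal | ∃ p : Measure (Ed d), IsProbabilityMeasure p ∧ p Xᶜ = 0 ∧
      c = ((∫ y, φ y ∂p : ℝ) : EReal) + (Gcost f X x p : EReal) }

/-- `φ = φ^G` on `E`. -/
def GEq {d : ℕ} (f : Matd d → ℝ≥0∞) (X : Set (Ed d)) (φ : Ed d → ℝ) (E : Set (Ed d)) : Prop :=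
  ∀ x ∈ E, GTrans f X φ x = ((φ x : ℝ) : EReal)

/-- `𝒯(A) = sup { A : M | M ∈ S⁺⁺_d, f(M) = 1 }`. -/
def Tcal {d : ℕ} (f : Matd d → ℝ≥0∞) (A : Matd d) : EReal :=
  sSup { c : EReal | ∃ M : Matd d, M.PosDef ∧ f M = 1 ∧ c = ((frob A M : ℝ) : EReal) }

/-- `u` is a viscosity supersolution of `c − 𝒯(½∇²u) = 0` in `U`. -/
def IsViscSupersol {d : ℕ} (f : Matd d → ℝ≥0∞) (c : ℝ) (u : Ed d → ℝ) (U : Set (Ed d)) : Prop :=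
  ∀ φ : Ed d → ℝ, ContDiffOn ℝ 2 φ U → ∀ x ∈ U,
    IsLocalMinOn (fun y => u y - φ y) U x →
    Tcal f ((1/2 : ℝ) • hess φ x) ≤ ((c : ℝ) : EReal)

/-- Integral of an `EReal`-valued function against a measure
(positive part minus negative part). -/
def erealInt {d : ℕ} (m : Measure (Ed d)) (u : Ed d → EReal) : EReal :=
  ((∫⁻ y, ENNReal.ofReal ((u y).toReal) ∂m : ℝ≥0∞) : EReal) -
    ((∫⁻ y, (if u y = ⊥ then (⊤ : ℝ≥0∞) else ENNReal.ofReal (-(u y).toReal)) ∂m : ℝ≥0∞) : EReal)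

/-- `u : U → ℝ ∪ {−∞}` is subharmonic on the open set `U`: it is upper semicontinuous,
not identically `−∞` on any connected component, and satisfies the sub-mean value
inequality on spheres. -/
def Subharmonic {d : ℕ} (U : Set (Ed d)) (u : Ed d → EReal) : Prop :=
  (∀ x, u x ≠ ⊤) ∧
  (∀ x ∈ U, ∃ y ∈ connectedComponentIn U x, u y ≠ ⊥) ∧
  UpperSemicontinuousOn u U ∧
  (∀ x ∈ U, ∀ r : ℝ, 0 < r → Metric.closedBall x r ⊆ U →
    (((μH[(d : ℝ) - 1] (Metric.sphere x r)).toReal : ℝ) : EReal) * u x ≤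
      erealInt ((μH[(d : ℝ) - 1]).restrict (Metric.sphere x r)) u)

/-- The (topological) support of a measure. -/
def msupp {d : ℕ} (m : Measure (Ed d)) : Set (Ed d) :=
  { x | ∀ U : Set (Ed d), IsOpen U → x ∈ U → m U ≠ 0 }

/-- `m₁ ≤_SH m₂`: subharmonic order. -/
def SHOrder {d : ℕ} (m₁ m₂ : Measure (Ed d)) : Prop :=
  ∀ U : Set (Ed d), IsOpen U → msupp (m₁ + m₂) ⊆ U →
    ∀ u : Ed d → EReal, Subharmonic U u →
      erealInt (m₁.restrict U) u ≤ erealInt (m₂.restrict U) u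

/-- The second moment matrix `∫ x ⊗ x dκ`. -/
def secondMoment {d : ℕ} (κ : Measure (Ed d)) : Matd d :=
  fun i j => ∫ x, x i * x j ∂κ

end

/-!
Since `f` is sublinear and lower semicontinuous, Hahn–Banach applied to the closed convex cone
`{(M, t) | f(M) ≤ t}` shows that `f(N) = sup { A : N | A ∈ dom(f⋆) }`. Given `A ∈ dom(f⋆)` and a
competitor `λ = ρ·m`, test the equation `tr(½∇²λ) = ν − μ` with `φ(x) = xᵀAx`, cut off outside
the compact set `X`: since `½∇²φ = ½(A + Aᵀ)` and `ρ` is symmetric, this gives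
`∫ A : ρ dm = A : ∫ x ⊗ x d(ν − μ)`, and `A : ρ ≤ f(ρ)` bounds the left side by the cost of `λ`.
-/

instance Matrix.locallyConvexSpace {m n : Type*} : LocallyConvexSpace ℝ (Matrix m n ℝ) :=
  inferInstanceAs (LocallyConvexSpace ℝ (m → n → ℝ))

section Sublinear

variable {E : Type*} {f : E → ℝ≥0∞}

def conicEpigraph (f : E → ℝ≥0∞) : Set (E × ℝ) :=
  {p | 0 ≤ p.2 ∧ f p.1 ≤ ENNReal.ofReal p.2}

lemma isClosed_conicEpigraph [TopologicalSpace E] (hf : LowerSemicontinuous f) :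
    IsClosed (conicEpigraph f) := by
  have hcont : Continuous fun p : E × ℝ => (p.1, ENNReal.ofReal p.2) :=
    continuous_fst.prodMk (ENNReal.continuous_ofReal.comp continuous_snd)
  exact (isClosed_le continuous_const continuous_snd).inter
    (hf.isClosed_epigraph.preimage hcont)

variable [AddCommGroup E]

lemma add_mem_conicEpigraph (hadd : ∀ x y, f (x + y) ≤ f x + f y)
    {p q : E × ℝ} (hp : p ∈ conicEpigraph f) (hq : q ∈ conicEpigraph f) :
    p + q ∈ conicEpigraph f := by
  refine ⟨add_nonneg hp.1 hq.1, ?_⟩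
  calc f (p.1 + q.1) ≤ f p.1 + f q.1 := hadd _ _
    _ ≤ ENNReal.ofReal p.2 + ENNReal.ofReal q.2 := add_le_add hp.2 hq.2
    _ = ENNReal.ofReal (p + q).2 := (ENNReal.ofReal_add hp.1 hq.1).symm

variable [Module ℝ E]

lemma apply_zero_of_posHomogeneous
    (hsmul : ∀ t : ℝ, 0 ≤ t → ∀ x, f (t • x) = ENNReal.ofReal t * f x) : f 0 = 0 := by
  simpa using hsmul 0 le_rfl 0

lemma smul_mem_conicEpigraph
    (hsmul : ∀ t : ℝ, 0 ≤ t → ∀ x, f (t • x) = ENNReal.ofReal t * f x)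
    {p : E × ℝ} (hp : p ∈ conicEpigraph f) {c : ℝ} (hc : 0 ≤ c) :
    c • p ∈ conicEpigraph f := by
  refine ⟨mul_nonneg hc hp.1, ?_⟩
  simp only [Prod.smul_fst, Prod.smul_snd, smul_eq_mul, hsmul c hc, ENNReal.ofReal_mul hc]
  exact mul_le_mul_right hp.2 _

lemma convex_conicEpigraph (hadd : ∀ x y, f (x + y) ≤ f x + f y)
    (hsmul : ∀ t : ℝ, 0 ≤ t → ∀ x, f (t • x) = ENNReal.ofReal t * f x) :
    Convex ℝ (conicEpigraph f) := fun _ hp _ hq _ _ ha hb _ =>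
  add_mem_conicEpigraph hadd (smul_mem_conicEpigraph hsmul hp ha)
    (smul_mem_conicEpigraph hsmul hq hb)

variable [TopologicalSpace E] [IsTopologicalAddGroup E] [ContinuousSMul ℝ E]
  [LocallyConvexSpace ℝ E]

lemma exists_clm_nonpos_on_conicEpigraph (hadd : ∀ x y, f (x + y) ≤ f x + f y)
    (hsmul : ∀ t : ℝ, 0 ≤ t → ∀ x, f (t • x) = ENNReal.ofReal t * f x)
    (hf : LowerSemicontinuous f) {p₀ : E × ℝ} (hp₀ : p₀ ∉ conicEpigraph f) :
    ∃ L : E × ℝ →L[ℝ] ℝ, (∀ p ∈ conicEpigraph f, L p ≤ 0) ∧ 0 < L p₀ := by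
  obtain ⟨L, u, hLu, huL⟩ := geometric_hahn_banach_closed_point
    (convex_conicEpigraph hadd hsmul) (isClosed_conicEpigraph hf) hp₀
  have hu : 0 < u := by
    simpa using hLu 0 ⟨le_rfl, by simp [apply_zero_of_posHomogeneous hsmul]⟩
  refine ⟨L, fun p hp => ?_, hu.trans huL⟩
  -- a cone on which `L < u` lies in `{L ≤ 0}`: otherwise rescale a point to reach `L = u`
  by_contra! hLp
  have := hLu _ (smul_mem_conicEpigraph hsmul hp (div_pos hu hLp).le)
  rw [map_smul, smul_eq_mul, div_mul_cancel₀ u hLp.ne'] at this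
  exact this.false

theorem exists_clm_le_of_lt_of_sublinear (hadd : ∀ x y, f (x + y) ≤ f x + f y)
    (hsmul : ∀ t : ℝ, 0 ≤ t → ∀ x, f (t • x) = ENNReal.ofReal t * f x)
    (hf : LowerSemicontinuous f) {x₀ : E} {r : ℝ} (hr : ENNReal.ofReal r < f x₀) :
    ∃ ℓ : E →L[ℝ] ℝ, (∀ x, ENNReal.ofReal (ℓ x) ≤ f x) ∧ r < ℓ x₀ := by
  obtain ⟨L, hLS, hL₀⟩ := exists_clm_nonpos_on_conicEpigraph hadd hsmul hf
    (p₀ := (x₀, r)) fun h => (h.2.trans_lt hr).false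
  set α := L.comp (ContinuousLinearMap.inl ℝ E ℝ)
  set s := L (0, 1)
  have hL : ∀ x t, L (x, t) = α x + t * s := fun x t => by
    have : ((x, t) : E × ℝ) = (x, 0) + t • (0, 1) := by simp
    rw [this, map_add, map_smul, smul_eq_mul]
    rfl
  have hs : s ≤ 0 := hLS _ ⟨zero_le_one, by simp [apply_zero_of_posHomogeneous hsmul]⟩
  have hdom : ∀ x, f x ≠ ⊤ → α x + (f x).toReal * s ≤ 0 := fun x hx =>
    hL x _ ▸ hLS _ ⟨ENNReal.toReal_nonneg, (ENNReal.ofReal_toReal hx).ge⟩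
  rw [hL] at hL₀
  suffices ∃ ℓ : E →L[ℝ] ℝ, (∀ x, f x ≠ ⊤ → ℓ x ≤ (f x).toReal) ∧ r < ℓ x₀ by
    obtain ⟨ℓ, hℓ, hℓ₀⟩ := this
    refine ⟨ℓ, fun x => ?_, hℓ₀⟩
    rcases eq_or_ne (f x) ⊤ with hx | hx
    · simp [hx]
    · exact (ENNReal.ofReal_le_iff_le_toReal hx).2 (hℓ x hx)
  rcases hs.lt_or_eq with hs | hs
  · refine ⟨(-s)⁻¹ • α, fun x hx => ?_, ?_⟩
    · have := hdom x hx
      rw [smul_apply, smul_eq_mul, inv_mul_le_iff₀ (neg_pos.2 hs)]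
      nlinarith
    · rw [smul_apply, smul_eq_mul, lt_inv_mul_iff₀ (neg_pos.2 hs)]
      linarith
  · -- now `α ≤ 0` on `dom f` and `α x₀ > 0`, so any positive multiple of `α` works
    rw [hs, mul_zero, add_zero] at hL₀
    refine ⟨((|r| + 1) / α x₀) • α, fun x hx => ?_, ?_⟩
    · have := hdom x hx
      rw [hs, mul_zero, add_zero] at this
      rw [smul_apply, smul_eq_mul]
      exact (mul_nonpos_of_nonneg_of_nonpos (by positivity) this).trans ENNReal.toReal_nonneg
    · rw [smul_apply, smul_eq_mul, div_mul_cancel₀ _ hL₀.ne']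
      linarith [le_abs_self r]

end Sublinear

section Frobenius

open scoped Matrix

variable {d : ℕ}

lemma frob_add_left (A B M : Matd d) : frob (A + B) M = frob A M + frob B M := by
  simp only [frob, Matrix.add_apply, add_mul, Finset.sum_add_distrib]

lemma frob_transpose_left (A M : Matd d) : frob Aᵀ M = frob A Mᵀ := by
  simp only [frob, Matrix.transpose_apply]
  exact Finset.sum_comm

lemma frob_sub_right (A M N : Matd d) : frob A (M - N) = frob A M - frob A N := by
  simp only [frob, Matrix.sub_apply, mul_sub, Finset.sum_sub_distrib]

lemma half_frob_add_transpose {A M : Matd d} (hM : Mᵀ = M) :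
    (1 / 2 : ℝ) * frob (A + Aᵀ) M = frob A M := by
  rw [frob_add_left, frob_transpose_left, hM]
  ring

lemma frob_of_apply_single (ℓ : Matd d →ₗ[ℝ] ℝ) (M : Matd d) :
    frob (Matrix.of fun i j => ℓ (Matrix.single i j 1)) M = ℓ M := by
  conv_rhs => rw [Matrix.matrix_eq_sum_single M]
  simp only [frob, Matrix.of_apply, map_sum]
  refine Finset.sum_congr rfl fun i _ => Finset.sum_congr rfl fun j _ => ?_
  rw [mul_comm, ← smul_eq_mul, ← map_smul, Matrix.smul_single, smul_eq_mul, mul_one]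

lemma ofReal_frob_le_of_mem_domFstar {f : Matd d → ℝ≥0∞} {A : Matd d} (hA : A ∈ domFstar f)
    (M : Matd d) : ENNReal.ofReal (frob A M) ≤ f M := by
  rcases eq_or_ne (f M) ⊤ with hM | hM
  · exact hM ▸ le_top
  · exact hA M hM

theorem iSup_domFstar_frob_eq {f : Matd d → ℝ≥0∞} (hadd : ∀ A B, f (A + B) ≤ f A + f B)
    (hsmul : ∀ t : ℝ, 0 ≤ t → ∀ A, f (t • A) = ENNReal.ofReal t * f A)
    (hf : LowerSemicontinuous f) (N : Matd d) :
    ⨆ A ∈ domFstar f, ENNReal.ofReal (frob A N) = f N := by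
  refine le_antisymm (iSup₂_le fun A hA => ofReal_frob_le_of_mem_domFstar hA N)
    (le_of_forall_lt fun c hc => ?_)
  obtain ⟨r, -, hcr, hrN⟩ := ENNReal.lt_iff_exists_real_btwn.1 hc
  obtain ⟨ℓ, hℓ, hrℓ⟩ := exists_clm_le_of_lt_of_sublinear hadd hsmul hf hrN
  have hA := frob_of_apply_single (ℓ : Matd d →ₗ[ℝ] ℝ)
  calc c < ENNReal.ofReal r := hcr
    _ ≤ ENNReal.ofReal (frob _ N) := ENNReal.ofReal_le_ofReal ((hA N).symm ▸ hrℓ.le)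
    _ ≤ _ := le_iSup₂_of_le _ (fun M _ => (hA M).symm ▸ hℓ M) le_rfl

end Frobenius

section Bilinear

variable {𝕜 E F : Type*} [NontriviallyNormedField 𝕜] [NormedAddCommGroup E] [NormedSpace 𝕜 E]
  [NormedAddCommGroup F] [NormedSpace 𝕜 F]

lemma fderiv_bilinear_diag (B : E →L[𝕜] E →L[𝕜] F) :
    fderiv 𝕜 (fun y => B y y) = fun x => B x + B.flip x := by
  funext x
  refine ((B.hasFDerivAt_of_bilinear (hasFDerivAt_id x) (hasFDerivAt_id x)).congr_fderiv ?_).fderiv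
  ext v
  simp

lemma iteratedFDeriv_two_bilinear_diag (B : E →L[𝕜] E →L[𝕜] F) (x u v : E) :
    iteratedFDeriv 𝕜 2 (fun y => B y y) x ![u, v] = B u v + B v u := by
  rw [iteratedFDeriv_two_apply, fderiv_bilinear_diag]
  have : (fun x => B x + B.flip x) = ⇑(B + B.flip) := rfl
  rw [this, ContinuousLinearMap.fderiv]
  simp

end Bilinear

lemma integrable_of_continuous_of_null_compl {α : Type*} [TopologicalSpace α] [T2Space α]
    [MeasurableSpace α] [OpensMeasurableSpace α] {κ : Measure α} [IsFiniteMeasure κ]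
    {K : Set α} (hK : IsCompact K) (hκK : κ Kᶜ = 0) {g : α → ℝ} (hg : Continuous g) :
    Integrable g κ := by
  rw [← Measure.restrict_eq_self_of_ae_mem (mem_ae_iff.2 hκK)]
  exact hg.continuousOn.integrableOn_compact hK

lemma ofReal_integral_le_lintegral_ofReal {α : Type*} [MeasurableSpace α] {κ : Measure α}
    (g : α → ℝ) : ENNReal.ofReal (∫ x, g x ∂κ) ≤ ∫⁻ x, ENNReal.ofReal (g x) ∂κ := by
  by_cases hg : Integrable g κ
  · rw [integral_eq_lintegral_pos_part_sub_lintegral_neg_part hg]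
    exact (ENNReal.ofReal_le_ofReal (sub_le_self _ ENNReal.toReal_nonneg)).trans
      ENNReal.ofReal_toReal_le
  · simp [integral_undef hg]

section QuadraticTestFunction

variable {d : ℕ}

open scoped Matrix

noncomputable def matrixBilin (A : Matd d) : Ed d →L[ℝ] Ed d →L[ℝ] ℝ :=
  ∑ i, ∑ j, A i j • (EuclideanSpace.proj i).smulRight (EuclideanSpace.proj j : Ed d →L[ℝ] ℝ)

lemma matrixBilin_apply (A : Matd d) (u v : Ed d) :
    matrixBilin A u v = ∑ i, ∑ j, A i j * (u i * v j) := by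
  simp [matrixBilin]

lemma matrixBilin_single (A : Matd d) (i j : Fin d) :
    matrixBilin A (EuclideanSpace.single i 1) (EuclideanSpace.single j 1) = A i j := by
  simp [matrixBilin_apply]

lemma contDiff_matrixBilin_diag (A : Matd d) : ContDiff ℝ 2 fun y => matrixBilin A y y :=
  (matrixBilin A).isBoundedBilinearMap.contDiff.comp (contDiff_id.prodMk contDiff_id)

lemma hess_matrixBilin_diag (A : Matd d) (x : Ed d) :
    hess (fun y => matrixBilin A y y) x = A + Aᵀ := by
  ext i j
  simp only [hess, iteratedFDeriv_two_bilinear_diag, matrixBilin_single, Matrix.add_apply,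
    Matrix.transpose_apply]

lemma integral_matrixBilin_diag (A : Matd d) {X : Set (Ed d)} (hX : IsCompact X)
    {κ : Measure (Ed d)} [IsFiniteMeasure κ] (hκX : κ Xᶜ = 0) :
    ∫ y, matrixBilin A y y ∂κ = frob A (secondMoment κ) := by
  have hint : ∀ i j, Integrable (fun y : Ed d => A i j * (y i * y j)) κ := fun i j =>
    integrable_of_continuous_of_null_compl hX hκX (by fun_prop)
  simp only [matrixBilin_apply, frob, secondMoment]
  rw [integral_finsetSum _ fun i _ => integrable_finsetSum _ fun j _ => hint i j]
  refine Finset.sum_congr rfl fun i _ => ?_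
  rw [integral_finsetSum _ fun j _ => hint i j]
  exact Finset.sum_congr rfl fun j _ => integral_const_mul _ _

end QuadraticTestFunction

section StaticCompetitor

open scoped Matrix

variable {d : ℕ}

lemma hess_congr_of_eventuallyEq {φ g : Ed d → ℝ} {x : Ed d} (h : φ =ᶠ[𝓝 x] g) :
    hess φ x = hess g x := by
  unfold hess
  rw [(h.iteratedFDeriv ℝ 2).eq_of_nhds]

lemma exists_isC2c_eventuallyEq {g : Ed d → ℝ} (hg : ContDiff ℝ 2 g) {X : Set (Ed d)}
    (hX : IsCompact X) : ∃ φ, IsC2c φ ∧ ∀ x ∈ X, φ =ᶠ[𝓝 x] g := by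
  obtain ⟨R, hR, hXR⟩ := hX.isBounded.subset_ball_lt 0 0
  let χ : ContDiffBump (0 : Ed d) := ⟨R, R + 1, hR, by linarith⟩
  refine ⟨fun y => χ y * g y, ⟨χ.contDiff.mul hg, χ.hasCompactSupport.mul_right⟩,
    fun x hx => ?_⟩
  filter_upwards [Metric.isOpen_ball.mem_nhds (hXR hx)] with y hy
  rw [χ.one_of_mem_closedBall (Metric.ball_subset_closedBall hy), one_mul]

namespace IsStaticCompetitor

variable {X : Set (Ed d)} {μ ν m : Measure (Ed d)} {ρ : Ed d → Matd d}

/-- Cutting `g` off outside a neighbourhood of `X` changes none of the integrals. -/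
lemma integral_hess_eq (h : IsStaticCompetitor X μ ν m ρ) (hX : IsCompact X)
    (hμX : μ Xᶜ = 0) (hνX : ν Xᶜ = 0) {g : Ed d → ℝ} (hg : ContDiff ℝ 2 g) :
    ∫ x, (1 / 2 : ℝ) * frob (hess g x) (ρ x) ∂m = ∫ x, g x ∂ν - ∫ x, g x ∂μ := by
  obtain ⟨φ, hφ, hφg⟩ := exists_isC2c_eventuallyEq hg hX
  have hae : ∀ κ : Measure (Ed d), κ Xᶜ = 0 → ∀ᵐ x ∂κ, φ =ᶠ[𝓝 x] g := fun κ hκ =>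
    Filter.mem_of_superset (mem_ae_iff.2 hκ) hφg
  have hint : ∀ κ : Measure (Ed d), κ Xᶜ = 0 → ∫ x, φ x ∂κ = ∫ x, g x ∂κ := fun κ hκ =>
    integral_congr_ae ((hae κ hκ).mono fun _ hx => hx.eq_of_nhds)
  rw [← hint ν hνX, ← hint μ hμX, ← h.2.2.2 φ hφ]
  exact integral_congr_ae <| (hae m h.2.1).mono fun x hx => by
    simp only [hess_congr_of_eventuallyEq hx]

lemma integral_frob_eq (h : IsStaticCompetitor X μ ν m ρ) (hX : IsCompact X)
    [IsFiniteMeasure μ] [IsFiniteMeasure ν] (hμX : μ Xᶜ = 0) (hνX : ν Xᶜ = 0) (A : Matd d) :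
    ∫ x, frob A (ρ x) ∂m = frob A (secondMoment ν - secondMoment μ) := by
  have hsymm : ∀ x, (ρ x)ᵀ = ρ x := fun x =>
    (Matrix.conjTranspose_eq_transpose_of_trivial _).symm.trans (h.2.2.1 x).isHermitian.eq
  have := h.integral_hess_eq hX hμX hνX (contDiff_matrixBilin_diag A)
  simp only [hess_matrixBilin_diag, half_frob_add_transpose (hsymm _)] at this
  rw [this, integral_matrixBilin_diag A hX hνX, integral_matrixBilin_diag A hX hμX,
    frob_sub_right]

lemma ofReal_frob_secondMoment_le (h : IsStaticCompetitor X μ ν m ρ) (hX : IsCompact X)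
    [IsFiniteMeasure μ] [IsFiniteMeasure ν] (hμX : μ Xᶜ = 0) (hνX : ν Xᶜ = 0)
    {f : Matd d → ℝ≥0∞} {A : Matd d} (hA : A ∈ domFstar f) :
    ENNReal.ofReal (frob A (secondMoment ν - secondMoment μ)) ≤ ∫⁻ x, f (ρ x) ∂m :=
  calc ENNReal.ofReal (frob A (secondMoment ν - secondMoment μ))
      = ENNReal.ofReal (∫ x, frob A (ρ x) ∂m) := by rw [h.integral_frob_eq hX hμX hνX]
    _ ≤ ∫⁻ x, ENNReal.ofReal (frob A (ρ x)) ∂m := ofReal_integral_le_lintegral_ofReal _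
    _ ≤ ∫⁻ x, f (ρ x) ∂m := lintegral_mono fun x => ofReal_frob_le_of_mem_domFstar hA _

end IsStaticCompetitor

end StaticCompetitor

theorem stmt5_general {d : ℕ} (f : Matd d → ℝ≥0∞) (hA1 : CostA1 f) (hA2 : CostA2 f)
    (Ω X : Set (Ed d))
    (hΩbdd : Bornology.IsBounded Ω) (hX : X = closure Ω)
    (μ ν : Measure (Ed d)) [IsFiniteMeasure μ] [IsFiniteMeasure ν]
    (hμX : μ Xᶜ = 0) (hνX : ν Xᶜ = 0) :
    f (secondMoment ν - secondMoment μ) ≤ Fstat f X μ ν := by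
  have hXc : IsCompact X := hX ▸ hΩbdd.isCompact_closure
  refine le_sInf ?_
  rintro _ ⟨m, ρ, hcomp, rfl⟩
  rw [← iSup_domFstar_frob_eq hA1.2.2.1 hA1.2.2.2 hA2]
  exact iSup₂_le fun A hA => hcomp.ofReal_frob_secondMoment_le hXc hμX hνX hA

/-- Corollary 3.6. For `μ, ν ∈ M₊(X)` with `μ(X) = ν(X)`,
`F(μ,ν) ≥ f(∫_X x ⊗ x d(ν − μ))`. -/
theorem stmt5 {d : ℕ} (hd : 0 < d) (f : Matd d → ℝ≥0∞) (hA1 : CostA1 f) (hA2 : CostA2 f)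
    (Ω X : Set (Ed d)) (hΩopen : IsOpen Ω) (hΩconv : Convex ℝ Ω)
    (hΩbdd : Bornology.IsBounded Ω) (hΩne : Ω.Nonempty) (hX : X = closure Ω)
    (μ ν : Measure (Ed d)) [IsFiniteMeasure μ] [IsFiniteMeasure ν]
    (hμX : μ Xᶜ = 0) (hνX : ν Xᶜ = 0) (hmass : μ X = ν X) :
    f (secondMoment ν - secondMoment μ) ≤ Fstat f X μ ν :=
  stmt5_general f hA1 hA2 Ω X hΩbdd hX μ ν hμX hνX
end

section
/- Assume (A3): dom(f) = S⁺_d and there exists k > 0 with f(A) ≤ k·tr(A) for all A ∈ S⁺_d. Then for each bounded lower semicontinuous φ on X with φ = φ^G, the function x ↦ φ(x) + k|x|² is convex on X and locally Lipschitz on Ω. -/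
open MeasureTheory Set Filter Topology
open scoped ENNReal NNReal Classical

/-! For `x = (1 - t) a + t b`, the two-point measure `p = (1 - t) δ_a + t δ_b` is reached from `δ_x`
by the rank-one diffusion `λ = 2 g_t(r) (b - a) ⊗ (b - a) dr` along the segment `r ↦ a + r (b - a)`,
where `g_t(r) = min(r, t) (1 - max(r, t))` is the Green function of `-d²/dr²` on `[0, 1]` with
Dirichlet conditions. Its total mass is `t (1 - t)`, so (A3) gives
`G(x, p) ≤ k t (1 - t) |b - a|²`, and testing `φ = φ^G` at `x` with `p` gives
`φ(x) ≤ (1 - t) φ(a) + t φ(b) + k t (1 - t) |b - a|²`: `φ` is `(-2k)`-strongly convex, i.e.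
`φ + k |·|²` is convex. A convex function on an open set is locally Lipschitz. -/

section Green

variable {ψ ψ' ψ'' : ℝ → ℝ}

theorem integral_sub_mul_of_hasDerivAt (hψ : ∀ r, HasDerivAt ψ (ψ' r) r)
    (hψ' : ∀ r, HasDerivAt ψ' (ψ'' r) r) (hψ'' : Continuous ψ'') (a b c : ℝ) :
    ∫ r in a..b, (r - c) * ψ'' r = (b - c) * ψ' b - (a - c) * ψ' a - (ψ b - ψ a) := by
  have hlin : ∀ r, HasDerivAt (fun r : ℝ => r - c) 1 r := fun r => (hasDerivAt_id r).sub_const c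
  have hcont' : Continuous ψ' := continuous_iff_continuousAt.2 fun r => (hψ' r).continuousAt
  rw [intervalIntegral.integral_mul_deriv_eq_deriv_mul (fun r _ => hlin r) (fun r _ => hψ' r)
    intervalIntegrable_const (hψ''.intervalIntegrable a b)]
  simp only [one_mul]
  rw [intervalIntegral.integral_eq_sub_of_hasDerivAt (fun r _ => hψ r)
    (hcont'.intervalIntegrable a b)]

def greenFun (t r : ℝ) : ℝ := min r t * (1 - max r t)

theorem continuous_greenFun (t : ℝ) : Continuous (greenFun t) := by
  unfold greenFun; fun_prop

theorem greenFun_nonneg {t r : ℝ} (ht : t ∈ Icc (0 : ℝ) 1) (hr : r ∈ Icc (0 : ℝ) 1) :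
    0 ≤ greenFun t r :=
  mul_nonneg (le_min hr.1 ht.1) (sub_nonneg.2 (max_le hr.2 ht.2))

theorem integral_greenFun_mul (hψ : ∀ r, HasDerivAt ψ (ψ' r) r)
    (hψ' : ∀ r, HasDerivAt ψ' (ψ'' r) r) (hψ'' : Continuous ψ'') {t : ℝ}
    (ht : t ∈ Icc (0 : ℝ) 1) :
    ∫ r in (0 : ℝ)..1, greenFun t r * ψ'' r = (1 - t) * ψ 0 + t * ψ 1 - ψ t := by
  have hint : ∀ a b, IntervalIntegrable (fun r => greenFun t r * ψ'' r) volume a b :=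
    fun a b => ((continuous_greenFun t).mul hψ'').intervalIntegrable a b
  have left : ∫ r in (0 : ℝ)..t, greenFun t r * ψ'' r
      = (1 - t) * ∫ r in (0 : ℝ)..t, (r - 0) * ψ'' r := by
    rw [← intervalIntegral.integral_const_mul]
    refine intervalIntegral.integral_congr fun r hr => ?_
    rw [uIcc_of_le ht.1] at hr
    simp only [greenFun, min_eq_left hr.2, max_eq_right hr.2]
    ring
  have right : ∫ r in t..1, greenFun t r * ψ'' r
      = -t * ∫ r in t..1, (r - 1) * ψ'' r := by
    rw [← intervalIntegral.integral_const_mul]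
    refine intervalIntegral.integral_congr fun r hr => ?_
    rw [uIcc_of_le ht.2] at hr
    simp only [greenFun, min_eq_right hr.1, max_eq_left hr.1]
    ring
  rw [← intervalIntegral.integral_add_adjacent_intervals (hint 0 t) (hint t 1), left, right,
    integral_sub_mul_of_hasDerivAt hψ hψ' hψ'', integral_sub_mul_of_hasDerivAt hψ hψ' hψ'']
  ring

theorem integral_greenFun {t : ℝ} (ht : t ∈ Icc (0 : ℝ) 1) :
    ∫ r in (0 : ℝ)..1, greenFun t r = t * (1 - t) / 2 := by
  have h := integral_greenFun_mul (ψ := fun r => r ^ 2 / 2) (ψ' := id) (ψ'' := fun _ => 1)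
    (fun r => by simpa using (hasDerivAt_pow 2 r).div_const 2) hasDerivAt_id continuous_const ht
  simp only [mul_one] at h
  rw [h]
  ring

end Green

noncomputable def greenMeasure (t : ℝ) : Measure ℝ :=
  (volume.restrict (Ioc 0 1)).withDensity fun r => ENNReal.ofReal (2 * greenFun t r)

theorem integral_greenMeasure {t : ℝ} (ht : t ∈ Icc (0 : ℝ) 1) (g : ℝ → ℝ) :
    ∫ r, g r ∂greenMeasure t = ∫ r in (0 : ℝ)..1, 2 * greenFun t r * g r := by
  have hmeas : Measurable fun r => ENNReal.ofReal (2 * greenFun t r) :=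
    ENNReal.measurable_ofReal.comp (continuous_const.mul (continuous_greenFun t)).measurable
  rw [greenMeasure, integral_withDensity_eq_integral_toReal_smul hmeas
    (ae_of_all _ fun _ => ENNReal.ofReal_lt_top), intervalIntegral.integral_of_le zero_le_one]
  refine setIntegral_congr_fun measurableSet_Ioc fun r hr => ?_
  rw [ENNReal.toReal_ofReal (mul_nonneg zero_le_two
    (greenFun_nonneg ht (Ioc_subset_Icc_self hr))), smul_eq_mul]

theorem greenMeasure_univ {t : ℝ} (ht : t ∈ Icc (0 : ℝ) 1) :
    greenMeasure t univ = ENNReal.ofReal (t * (1 - t)) := by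
  have hint : Integrable (fun r => 2 * greenFun t r) (volume.restrict (Ioc 0 1)) :=
    (continuous_const.mul (continuous_greenFun t)).integrableOn_Icc.mono_set Ioc_subset_Icc_self
  have hnonneg : 0 ≤ᵐ[volume.restrict (Ioc 0 1)] fun r => 2 * greenFun t r :=
    (ae_restrict_iff' measurableSet_Ioc).2 <| ae_of_all _ fun r hr =>
      mul_nonneg zero_le_two (greenFun_nonneg ht (Ioc_subset_Icc_self hr))
  rw [greenMeasure, withDensity_apply _ MeasurableSet.univ, Measure.restrict_univ,
    ← ofReal_integral_eq_lintegral_ofReal hint hnonneg, ← intervalIntegral.integral_of_le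
    zero_le_one, intervalIntegral.integral_const_mul, integral_greenFun ht]
  ring_nf

section Segment

variable {E : Type*} [NormedAddCommGroup E] [NormedSpace ℝ E] [MeasurableSpace E] [BorelSpace E]

noncomputable def segmentMeasure (a b : E) (t : ℝ) : Measure E :=
  (greenMeasure t).map (AffineMap.lineMap a b)

theorem integral_segmentMeasure (a b : E) {t : ℝ} (ht : t ∈ Icc (0 : ℝ) 1) {h : E → ℝ}
    (hh : Continuous h) :
    ∫ y, h y ∂segmentMeasure a b t
      = ∫ r in (0 : ℝ)..1, 2 * greenFun t r * h (AffineMap.lineMap a b r) := by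
  rw [segmentMeasure, integral_map AffineMap.lineMap_continuous.aemeasurable
    hh.aestronglyMeasurable, integral_greenMeasure ht]

theorem segmentMeasure_univ (a b : E) {t : ℝ} (ht : t ∈ Icc (0 : ℝ) 1) :
    segmentMeasure a b t univ = ENNReal.ofReal (t * (1 - t)) := by
  rw [segmentMeasure, Measure.map_apply AffineMap.lineMap_continuous.measurable
    MeasurableSet.univ, preimage_univ, greenMeasure_univ ht]

theorem segmentMeasure_compl_segment (a b : E) (t : ℝ) :
    segmentMeasure a b t (segment ℝ a b)ᶜ = 0 := by
  have hclosed : IsClosed (segment ℝ a b) := by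
    rw [segment_eq_image_lineMap]
    exact (isCompact_Icc.image AffineMap.lineMap_continuous).isClosed
  have hpre : AffineMap.lineMap a b ⁻¹' (segment ℝ a b)ᶜ ⊆ (Ioc (0 : ℝ) 1)ᶜ :=
    fun r hr hr01 => hr (lineMap_mem_segment ℝ a b (Ioc_subset_Icc_self hr01))
  rw [segmentMeasure, Measure.map_apply AffineMap.lineMap_continuous.measurable
    hclosed.measurableSet.compl]
  refine measure_mono_null hpre (withDensity_absolutelyContinuous _ _ ?_)
  rw [Measure.restrict_apply' measurableSet_Ioc, compl_inter_self, measure_empty]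

end Segment

section TwoPoint

variable {E : Type*} [MeasurableSpace E]

noncomputable def twoPointMeasure (a b : E) (t : ℝ) : Measure E :=
  ENNReal.ofReal (1 - t) • Measure.dirac a + ENNReal.ofReal t • Measure.dirac b

theorem isProbabilityMeasure_twoPointMeasure (a b : E) {t : ℝ} (ht : t ∈ Icc (0 : ℝ) 1) :
    IsProbabilityMeasure (twoPointMeasure a b t) := by
  constructor
  simp only [twoPointMeasure, Measure.add_apply, Measure.smul_apply, measure_univ, smul_eq_mul,
    mul_one]
  rw [← ENNReal.ofReal_add (sub_nonneg.2 ht.2) ht.1, sub_add_cancel, ENNReal.ofReal_one]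

variable [MeasurableSingletonClass E]

theorem integral_twoPointMeasure (a b : E) {t : ℝ} (ht : t ∈ Icc (0 : ℝ) 1) (g : E → ℝ) :
    ∫ y, g y ∂twoPointMeasure a b t = (1 - t) * g a + t * g b := by
  rw [twoPointMeasure, integral_add_measure, integral_smul_measure, integral_smul_measure,
    integral_dirac, integral_dirac, ENNReal.toReal_ofReal (sub_nonneg.2 ht.2),
    ENNReal.toReal_ofReal ht.1, smul_eq_mul, smul_eq_mul]
  · exact (integrable_dirac enorm_lt_top).smul_measure ENNReal.ofReal_ne_top
  · exact (integrable_dirac enorm_lt_top).smul_measure ENNReal.ofReal_ne_top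

theorem twoPointMeasure_compl {a b : E} {X : Set E} (ha : a ∈ X) (hb : b ∈ X) (t : ℝ) :
    twoPointMeasure a b t Xᶜ = 0 := by
  simp [twoPointMeasure, ha, hb]

end TwoPoint

section LineDerivatives

variable {E F : Type*} [NormedAddCommGroup E] [NormedSpace ℝ E] [NormedAddCommGroup F]
  [NormedSpace ℝ F]

theorem hasDerivAt_comp_lineMap {g : E → F} (hg : Differentiable ℝ g) (a b : E) (r : ℝ) :
    HasDerivAt (fun s => g (AffineMap.lineMap a b s))
      (fderiv ℝ g (AffineMap.lineMap a b r) (b - a)) r :=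
  (hg _).hasFDerivAt.comp_hasDerivAt r AffineMap.hasDerivAt_lineMap

theorem hasDerivAt_fderiv_comp_lineMap {φ : E → ℝ} (hφ : ContDiff ℝ 2 φ) (a b : E) (r : ℝ) :
    HasDerivAt (fun s => fderiv ℝ φ (AffineMap.lineMap a b s) (b - a))
      (fderiv ℝ (fderiv ℝ φ) (AffineMap.lineMap a b r) (b - a) (b - a)) r := by
  have hD := hasDerivAt_comp_lineMap ((hφ.fderiv_right one_add_one_eq_two.le).differentiable
    one_ne_zero) a b r
  simpa using hD.clm_apply (hasDerivAt_const r (b - a))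

end LineDerivatives

theorem frob_hess_vecMulVec {d : ℕ} (φ : Ed d → ℝ) (x v : Ed d) :
    frob (hess φ x) (Matrix.vecMulVec v v) = fderiv ℝ (fderiv ℝ φ) x v v := by
  set B := fderiv ℝ (fderiv ℝ φ) x
  have hv : ∑ i, v i • EuclideanSpace.single i (1 : ℝ) = v := by
    simpa using (EuclideanSpace.basisFun (Fin d) ℝ).toBasis.sum_repr v
  calc frob (hess φ x) (Matrix.vecMulVec v v)
      = ∑ i, ∑ j, v i * v j * B (EuclideanSpace.single i 1) (EuclideanSpace.single j 1) := by
        simp [frob, hess, iteratedFDeriv_two_apply, Matrix.vecMulVec_apply, B, mul_comm]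
    _ = B v v := by
        conv_rhs => rw [← hv]
        simp only [map_sum, map_smul, FunLike.coe_sum, Finset.sum_apply, FunLike.coe_smul,
          Pi.smul_apply, smul_eq_mul, Finset.mul_sum]
        rw [Finset.sum_comm]
        exact Finset.sum_congr rfl fun i _ => Finset.sum_congr rfl fun j _ => by ring

theorem continuous_frob_hess_vecMulVec {d : ℕ} {φ : Ed d → ℝ} (hφ : ContDiff ℝ 2 φ) (v : Ed d) :
    Continuous fun y => frob (hess φ y) (Matrix.vecMulVec v v) := by
  simp only [frob_hess_vecMulVec]
  have hD2 := (hφ.fderiv_right one_add_one_eq_two.le).continuous_fderiv one_ne_zero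
  exact (hD2.clm_apply continuous_const).clm_apply continuous_const

theorem posSemidef_vecMulVec_self {d : ℕ} (v : Ed d) :
    (Matrix.vecMulVec (v : Fin d → ℝ) v).PosSemidef := by
  simpa using Matrix.posSemidef_vecMulVec_self_star (v : Fin d → ℝ)

theorem trace_vecMulVec_self {d : ℕ} (v : Ed d) :
    (Matrix.vecMulVec (v : Fin d → ℝ) v).trace = ‖v‖ ^ 2 := by
  rw [Matrix.trace_vecMulVec, ← real_inner_self_eq_norm_sq,
    EuclideanSpace.inner_eq_star_dotProduct, star_trivial]

theorem isStaticCompetitor_segmentMeasure {d : ℕ} {X : Set (Ed d)} (hX : Convex ℝ X) {a b : Ed d}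
    (ha : a ∈ X) (hb : b ∈ X) {t : ℝ} (ht : t ∈ Icc (0 : ℝ) 1) :
    IsStaticCompetitor X (Measure.dirac (AffineMap.lineMap a b t)) (twoPointMeasure a b t)
      (segmentMeasure a b t)
      (fun _ => Matrix.vecMulVec (WithLp.ofLp (b - a)) (WithLp.ofLp (b - a))) := by
  refine ⟨⟨by simp [segmentMeasure_univ a b ht]⟩,
    measure_mono_null (compl_subset_compl.2 (hX.segment_subset ha hb))
      (segmentMeasure_compl_segment a b t),
    fun _ => posSemidef_vecMulVec_self (b - a), fun φ hφ => ?_⟩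
  have hφ2 : ContDiff ℝ 2 φ := hφ.1
  have hgreen := integral_greenFun_mul
    (hasDerivAt_comp_lineMap (hφ2.differentiable two_ne_zero) a b)
    (hasDerivAt_fderiv_comp_lineMap hφ2 a b)
    (((hφ2.fderiv_right one_add_one_eq_two.le).continuous_fderiv one_ne_zero).comp
      AffineMap.lineMap_continuous |>.clm_apply continuous_const |>.clm_apply continuous_const) ht
  rw [integral_segmentMeasure a b ht (h := fun y => 1 / 2 * frob (hess φ y) _)
    (continuous_const.mul (continuous_frob_hess_vecMulVec hφ2 (b - a))),
    integral_twoPointMeasure a b ht, integral_dirac]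
  simp only [AffineMap.lineMap_apply_zero, AffineMap.lineMap_apply_one] at hgreen
  rw [← hgreen]
  refine intervalIntegral.integral_congr fun r _ => ?_
  simp only [frob_hess_vecMulVec]
  ring

theorem Gcost_lineMap_twoPointMeasure_le {d : ℕ} {f : Matd d → ℝ≥0∞} {X : Set (Ed d)}
    (hX : Convex ℝ X) {k : ℝ}
    (hf : ∀ A : Matd d, A.PosSemidef → f A ≤ ENNReal.ofReal (k * A.trace))
    {a b : Ed d} (ha : a ∈ X) (hb : b ∈ X) {t : ℝ} (ht : t ∈ Icc (0 : ℝ) 1) :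
    Gcost f X (AffineMap.lineMap a b t) (twoPointMeasure a b t)
      ≤ ENNReal.ofReal (k * ‖b - a‖ ^ 2 * (t * (1 - t))) := by
  unfold Gcost Fstat
  refine le_trans (sInf_le ⟨_, _, isStaticCompetitor_segmentMeasure hX ha hb ht, rfl⟩) ?_
  rw [lintegral_const, segmentMeasure_univ a b ht,
    ENNReal.ofReal_mul' (mul_nonneg ht.1 (sub_nonneg.2 ht.2))]
  gcongr
  simpa only [trace_vecMulVec_self] using hf _ (posSemidef_vecMulVec_self (b - a))

theorem le_integral_add_of_GTrans_eq {d : ℕ} {f : Matd d → ℝ≥0∞} {X : Set (Ed d)}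
    {φ : Ed d → ℝ} {x : Ed d} (hx : GTrans f X φ x = φ x) {p : Measure (Ed d)}
    [IsProbabilityMeasure p] (hp : p Xᶜ = 0) {c : ℝ} (hc : 0 ≤ c)
    (hpc : Gcost f X x p ≤ ENNReal.ofReal c) :
    φ x ≤ ∫ y, φ y ∂p + c := by
  have hφx : (φ x : EReal) ≤ (∫ y, φ y ∂p : ℝ) + (Gcost f X x p : EReal) :=
    hx ▸ sInf_le ⟨p, ‹_›, hp, rfl⟩
  have hcost : (Gcost f X x p : EReal) ≤ c := by
    calc (Gcost f X x p : EReal) ≤ ((ENNReal.ofReal c : ℝ≥0∞) : EReal) :=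
          EReal.coe_ennreal_le_coe_ennreal_iff.2 hpc
      _ = c := by rw [EReal.coe_ennreal_ofReal, max_eq_left hc]
  exact_mod_cast hφx.trans (add_le_add_right hcost _)

theorem strongConvexOn_of_GEq {d : ℕ} {f : Matd d → ℝ≥0∞} {X : Set (Ed d)} (hX : Convex ℝ X)
    {k : ℝ} (hk : 0 ≤ k) (hf : ∀ A : Matd d, A.PosSemidef → f A ≤ ENNReal.ofReal (k * A.trace))
    {φ : Ed d → ℝ} (hG : GEq f X φ X) :
    StrongConvexOn X (-(2 * k)) φ := by
  refine ⟨hX, fun a ha b hb s t _ ht hst => ?_⟩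
  obtain rfl : s = 1 - t := by linarith
  have ht' : t ∈ Icc (0 : ℝ) 1 := ⟨ht, by linarith⟩
  have := isProbabilityMeasure_twoPointMeasure a b ht'
  have key := le_integral_add_of_GTrans_eq (hG _ (hX.lineMap_mem ha hb ht'))
    (twoPointMeasure_compl ha hb t)
    (mul_nonneg (by positivity) (mul_nonneg ht (sub_nonneg.2 ht'.2)))
    (Gcost_lineMap_twoPointMeasure_le hX hf ha hb ht')
  rw [integral_twoPointMeasure a b ht', AffineMap.lineMap_apply_module, norm_sub_rev] at key
  simp only [smul_eq_mul]
  linarith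

theorem stmt15_general {d : ℕ} (f : Matd d → ℝ≥0∞)
    (Ω X : Set (Ed d)) (hΩopen : IsOpen Ω) (hΩconv : Convex ℝ Ω)
    (hX : X = closure Ω)
    (k : ℝ) (hk : 0 < k)
    (hA3bd : ∀ A : Matd d, A.PosSemidef → f A ≤ ENNReal.ofReal (k * A.trace))
    (φ : Ed d → ℝ) (hG : GEq f X φ X) :
    ConvexOn ℝ X (fun x => φ x + k * ‖x‖ ^ 2) ∧
    (∀ x ∈ Ω, ∃ (K : NNReal) (t : Set (Ed d)), t ∈ 𝓝[Ω] x ∧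
      LipschitzOnWith K (fun y => φ y + k * ‖y‖ ^ 2) t) := by
  have hXconv : Convex ℝ X := hX ▸ hΩconv.closure
  have hconv : ConvexOn ℝ X (fun x => φ x + k * ‖x‖ ^ 2) := by
    have hshift : (fun x => φ x + k * ‖x‖ ^ 2) = fun x => φ x - -(2 * k) / 2 * ‖x‖ ^ 2 := by
      ext x; ring
    exact hshift ▸ strongConvexOn_iff_convex.1 (strongConvexOn_of_GEq hXconv hk.le hA3bd hG)
  exact ⟨hconv, (hconv.subset (hX ▸ subset_closure) hΩconv).locallyLipschitzOn hΩopen⟩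

/-- Corollary 4.6. Under (A3), for each bounded lower semicontinuous
`φ` on `X` with `φ = φ^G`, the function `x ↦ φ(x) + k|x|²` is convex on `X` and locally
Lipschitz on `Ω`. -/
theorem stmt15 {d : ℕ} (hd : 0 < d) (f : Matd d → ℝ≥0∞) (hA1 : CostA1 f) (hA2 : CostA2 f)
    (Ω X : Set (Ed d)) (hΩopen : IsOpen Ω) (hΩconv : Convex ℝ Ω)
    (hΩbdd : Bornology.IsBounded Ω) (hΩne : Ω.Nonempty) (hX : X = closure Ω)
    (k : ℝ) (hk : 0 < k)
    (hA3dom : ∀ M : Matd d, f M ≠ ⊤ ↔ M.PosSemidef)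
    (hA3bd : ∀ A : Matd d, A.PosSemidef → f A ≤ ENNReal.ofReal (k * A.trace))
    (φ : Ed d → ℝ) (hbdd : ∃ C : ℝ, ∀ x ∈ X, |φ x| ≤ C)
    (hlsc : LowerSemicontinuousOn φ X) (hG : GEq f X φ X) :
    ConvexOn ℝ X (fun x => φ x + k * ‖x‖ ^ 2) ∧
    (∀ x ∈ Ω, ∃ (K : NNReal) (t : Set (Ed d)), t ∈ 𝓝[Ω] x ∧
      LipschitzOnWith K (fun y => φ y + k * ‖y‖ ^ 2) t) :=
  stmt15_general f Ω X hΩopen hΩconv hX k hk hA3bd φ hG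
end
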